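/- arXiv:2409.17543 — 2 statements merged into one kernel-verified Lean document; each statement's English description precedes it below -/
import Mathlib

section
/- Let N ≥ 1 be an integer, let α ≥ 1, β ≥ 1 be real numbers and let 0 < δ ≤ min(α,β). Then there exists a constant C > 0, depending only on N, α, β, δ, such that for all points a, b ∈ ℝ^N with a ≠ b and every y ∈ ℝ^N one has 1/((1+|y−a|)^α (1+|y−b|)^β) ≤ (C/|a−b|^δ) · ( 1/(1+|y−a|)^{α+β−δ} + 1/(1+|y−b|)^{α+β−δ} ). -/
open Real MeasureTheory Finset

noncomputable section

abbrev E (N : ℕ) := EuclideanSpace ℝ (Fin N)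

lemma aux_min_bound (s t p q : ℝ) (hs : 1 ≤ s) (ht : 1 ≤ t) (hp : 0 ≤ p) (hq : 0 ≤ q) :
    1 / (s ^ p * t ^ q) ≤ 1 / s ^ (p + q) + 1 / t ^ (p + q) := by
  have hs0 : (0:ℝ) < s := lt_of_lt_of_le one_pos hs
  have ht0 : (0:ℝ) < t := lt_of_lt_of_le one_pos ht
  rcases le_total s t with h | h
  · have hb : s ^ (p + q) ≤ s ^ p * t ^ q := by
      rw [Real.rpow_add hs0]
      exact mul_le_mul_of_nonneg_left (Real.rpow_le_rpow hs0.le h hq)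
        (Real.rpow_nonneg hs0.le p)
    calc 1 / (s ^ p * t ^ q) ≤ 1 / s ^ (p + q) :=
          one_div_le_one_div_of_le (Real.rpow_pos_of_pos hs0 _) hb
      _ ≤ _ := le_add_of_nonneg_right (by positivity)
  · have hb : t ^ (p + q) ≤ s ^ p * t ^ q := by
      rw [Real.rpow_add ht0]
      exact mul_le_mul_of_nonneg_right (Real.rpow_le_rpow ht0.le h hp)
        (Real.rpow_nonneg ht0.le q)
    calc 1 / (s ^ p * t ^ q) ≤ 1 / t ^ (p + q) :=
          one_div_le_one_div_of_le (Real.rpow_pos_of_pos ht0 _) hb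
      _ ≤ _ := le_add_of_nonneg_left (by positivity)

/-- Cross-term decay estimate for the weights centered at two distinct points. -/
theorem weight_product_estimate (N : ℕ) (hN : 1 ≤ N) (α β δ : ℝ)
    (hα : 1 ≤ α) (hβ : 1 ≤ β) (hδ : 0 < δ) (hδ' : δ ≤ min α β) :
    ∃ C : ℝ, 0 < C ∧ ∀ a b : E N, a ≠ b → ∀ y : E N,
      1 / ((1 + ‖y - a‖) ^ α * (1 + ‖y - b‖) ^ β)
        ≤ C / ‖a - b‖ ^ δ *
            (1 / (1 + ‖y - a‖) ^ (α + β - δ) + 1 / (1 + ‖y - b‖) ^ (α + β - δ)) := by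
  have hδα : δ ≤ α := le_trans hδ' (min_le_left _ _)
  have hδβ : δ ≤ β := le_trans hδ' (min_le_right _ _)
  refine ⟨(2:ℝ) ^ δ, Real.rpow_pos_of_pos two_pos δ, fun a b hab y => ?_⟩
  set s : ℝ := 1 + ‖y - a‖ with hs_def
  set t : ℝ := 1 + ‖y - b‖ with ht_def
  have hs : (1:ℝ) ≤ s := le_add_of_nonneg_right (norm_nonneg _)
  have ht : (1:ℝ) ≤ t := le_add_of_nonneg_right (norm_nonneg _)
  have hs0 : (0:ℝ) < s := lt_of_lt_of_le one_pos hs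
  have ht0 : (0:ℝ) < t := lt_of_lt_of_le one_pos ht
  have hd0 : (0:ℝ) < ‖a - b‖ := by
    rw [norm_pos_iff]; exact sub_ne_zero_of_ne hab
  set d : ℝ := ‖a - b‖ with hd_def
  have htri : d ≤ ‖y - a‖ + ‖y - b‖ := by
    calc d = ‖(a - y) + (y - b)‖ := by rw [hd_def, sub_add_sub_cancel]
      _ ≤ ‖a - y‖ + ‖y - b‖ := norm_add_le _ _
      _ = ‖y - a‖ + ‖y - b‖ := by rw [norm_sub_rev a y]
  have hC : ((2:ℝ) ^ δ) / d ^ δ = (2 / d) ^ δ := by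
    rw [Real.div_rpow (by norm_num) hd0.le]
  -- key step for one of the two symmetric cases
  have key : ∀ u v p q : ℝ, 1 ≤ u → 1 ≤ v → δ ≤ p → 1 ≤ q → d / 2 ≤ u →
      1 / (u ^ p * v ^ q) ≤ (2:ℝ) ^ δ / d ^ δ * (1 / u ^ (p + q - δ) + 1 / v ^ (p + q - δ)) := by
    intro u v p q hu hv hpδ hq hud
    have hu0 : (0:ℝ) < u := lt_of_lt_of_le one_pos hu
    have hv0 : (0:ℝ) < v := lt_of_lt_of_le one_pos hv
    have hsplit : u ^ p = u ^ δ * u ^ (p - δ) := by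
      rw [← Real.rpow_add hu0]; ring_nf
    have h1 : (d / 2) ^ δ ≤ u ^ δ := Real.rpow_le_rpow (by positivity) hud hδ.le
    have h2 : 1 / u ^ δ ≤ (2 / d) ^ δ := by
      have h1' : (1 : ℝ) / u ^ δ ≤ 1 / (d / 2) ^ δ :=
        one_div_le_one_div_of_le (Real.rpow_pos_of_pos (by positivity) _) h1
      calc (1:ℝ) / u ^ δ ≤ 1 / (d / 2) ^ δ := h1'
        _ = (2 / d) ^ δ := by
            rw [one_div, ← Real.inv_rpow (by positivity), inv_div]
    have h3 : 1 / (u ^ (p - δ) * v ^ q) ≤ 1 / u ^ (p - δ + q) + 1 / v ^ (p - δ + q) :=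
      aux_min_bound u v (p - δ) q hu hv (by linarith) (by linarith)
    have heq : p - δ + q = p + q - δ := by ring
    rw [heq] at h3
    calc 1 / (u ^ p * v ^ q) = 1 / u ^ δ * (1 / (u ^ (p - δ) * v ^ q)) := by
          rw [hsplit]; field_simp
      _ ≤ (2 / d) ^ δ * (1 / u ^ (p + q - δ) + 1 / v ^ (p + q - δ)) := by
          apply mul_le_mul h2 h3 (by positivity) (by positivity)
      _ = (2:ℝ) ^ δ / d ^ δ * (1 / u ^ (p + q - δ) + 1 / v ^ (p + q - δ)) := by rw [hC]
  rcases le_total (d / 2) ‖y - a‖ with h | h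
  · have : d / 2 ≤ s := le_trans h (by rw [hs_def]; linarith)
    exact key s t α β hs ht hδα hβ this
  · have hb : d / 2 ≤ ‖y - b‖ := by linarith
    have hbt : d / 2 ≤ t := le_trans hb (by rw [ht_def]; linarith)
    have := key t s β α ht hs hδβ hα hbt
    calc 1 / (s ^ α * t ^ β) = 1 / (t ^ β * s ^ α) := by ring_nf
      _ ≤ (2:ℝ) ^ δ / d ^ δ * (1 / t ^ (β + α - δ) + 1 / s ^ (β + α - δ)) := this
      _ = (2:ℝ) ^ δ / d ^ δ * (1 / s ^ (α + β - δ) + 1 / t ^ (α + β - δ)) := by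
          rw [show β + α - δ = α + β - δ by ring]; ring

end
end

section
/- Let N ≥ 3 be an integer and let 0 < δ < N−2. Then there exists a constant C > 0 such that for every y ∈ ℝ^N, ∫_{ℝ^N} |y−z|^{−(N−2)} (1+|z|)^{−(2+δ)} dz ≤ C (1+|y|)^{−δ}. -/
/-!
Put `R = 1 + ‖y‖` and split the space into the ball `B(y, R/2)`, the rest of `B(0, R)`,
and the exterior of `B(0, R)`. On the first piece `1 + ‖z‖ ≥ R/2`, on the second
`‖y - z‖ ≥ R/2`, and on the third `‖y - z‖ ≥ ‖z‖/4`. Each piece is thereby bounded by a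
power of `R` times an integral of `‖x‖ ^ (-q)` over the unit ball (finite for `q < N`) or its
complement (finite for `q > N`): by homogeneity of `‖x‖ ^ (-q)` and of Lebesgue measure, the
integral over `B(0, R)` or its complement is `R ^ (N - q)` times that over the unit ball or its
complement. The three powers of `R` all equal `R ^ (N - (N - 2) - (2 + δ)) = R ^ (-δ)`.
-/

open Real MeasureTheory Finset

noncomputable section

open Set Metric Module
open scoped ENNReal Pointwise
open ENNReal (ofReal)

namespace RieszPotential

theorem setLIntegral_ball_comp_norm_sub {G : Type*} [NormedAddCommGroup G] [MeasurableSpace G]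
    [BorelSpace G] {μ : Measure G} [μ.IsAddRightInvariant] (g : ℝ → ℝ≥0∞) (y : G) (r : ℝ) :
    ∫⁻ z in ball y r, g ‖y - z‖ ∂μ = ∫⁻ x in ball (0 : G) r, g ‖x‖ ∂μ := by
  have hpre : (· - y) ⁻¹' ball (0 : G) r = ball y r := by
    ext z
    simp [dist_eq_norm]
  have h := (measurePreserving_sub_right μ y).setLIntegral_comp_preimage_emb
    (MeasurableEquiv.subRight y).measurableEmbedding (fun x ↦ g ‖x‖) (ball 0 r)
  rw [hpre] at h
  simp_rw [← h, norm_sub_rev y]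

variable {V : Type*} [NormedAddCommGroup V] [NormedSpace ℝ V] [FiniteDimensional ℝ V]
  [MeasurableSpace V] [BorelSpace V] {μ : Measure V} [μ.IsAddHaarMeasure]

theorem lintegral_comp_smul_of_pos (f : V → ℝ≥0∞) {r : ℝ} (hr : 0 < r) :
    ∫⁻ x, f (r • x) ∂μ = ofReal (r ^ finrank ℝ V)⁻¹ * ∫⁻ x, f x ∂μ := by
  calc ∫⁻ x, f (r • x) ∂μ = ∫⁻ x, f x ∂(μ.map (r • ·)) :=
        (lintegral_map_equiv f (MeasurableEquiv.smul₀ r hr.ne')).symm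
    _ = ofReal (r ^ finrank ℝ V)⁻¹ * ∫⁻ x, f x ∂μ := by
        rw [Measure.map_addHaar_smul μ hr.ne', lintegral_smul_measure, smul_eq_mul,
          abs_of_pos (by positivity)]

theorem setLIntegral_smul_set_norm_rpow_neg (q : ℝ) {r : ℝ} (hr : 0 < r) {S : Set V}
    (hS : MeasurableSet S) :
    ∫⁻ x in r • S, ofReal (‖x‖ ^ (-q)) ∂μ
      = ofReal (r ^ ((finrank ℝ V : ℝ) - q)) *
          ∫⁻ x in S, ofReal (‖x‖ ^ (-q)) ∂μ := by
  have hrS : MeasurableSet (r • S) := hS.const_smul₀ r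
  have hcomp : ∀ x : V, (r • S).indicator (fun x ↦ ofReal (‖x‖ ^ (-q))) (r • x)
      = ofReal (r ^ (-q)) * S.indicator (fun x ↦ ofReal (‖x‖ ^ (-q))) x := by
    intro x
    by_cases hx : x ∈ S
    · rw [indicator_of_mem ((smul_mem_smul_set_iff₀ hr.ne' S x).2 hx), indicator_of_mem hx,
        ← ENNReal.ofReal_mul (by positivity), norm_smul, norm_of_nonneg hr.le,
        mul_rpow hr.le (norm_nonneg x)]
    · rw [indicator_of_notMem (mt (smul_mem_smul_set_iff₀ hr.ne' S x).1 hx),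
        indicator_of_notMem hx, mul_zero]
  have hscale := lintegral_comp_smul_of_pos (μ := μ)
    ((r • S).indicator fun x ↦ ofReal (‖x‖ ^ (-q))) hr
  simp_rw [hcomp] at hscale
  rw [lintegral_const_mul' _ _ ENNReal.ofReal_ne_top, lintegral_indicator hrS,
    lintegral_indicator hS] at hscale
  have hd : 0 < r ^ finrank ℝ V := by positivity
  calc ∫⁻ x in r • S, ofReal (‖x‖ ^ (-q)) ∂μ
      = ofReal (r ^ finrank ℝ V) *
          (ofReal (r ^ finrank ℝ V)⁻¹ * ∫⁻ x in r • S, ofReal (‖x‖ ^ (-q)) ∂μ) := by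
        rw [← mul_assoc, ← ENNReal.ofReal_mul hd.le, mul_inv_cancel₀ hd.ne',
          ENNReal.ofReal_one, one_mul]
    _ = _ := by
        rw [← hscale, ← mul_assoc, ← ENNReal.ofReal_mul hd.le, ← rpow_natCast,
          ← rpow_add hr, sub_eq_add_neg]

theorem setLIntegral_ball_norm_rpow_neg (q : ℝ) {r : ℝ} (hr : 0 < r) :
    ∫⁻ x in ball (0 : V) r, ofReal (‖x‖ ^ (-q)) ∂μ
      = ofReal (r ^ ((finrank ℝ V : ℝ) - q)) *
          ∫⁻ x in ball (0 : V) 1, ofReal (‖x‖ ^ (-q)) ∂μ := by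
  rw [← smul_unitBall_of_pos hr, setLIntegral_smul_set_norm_rpow_neg q hr measurableSet_ball]

theorem setLIntegral_compl_ball_norm_rpow_neg (q : ℝ) {r : ℝ} (hr : 0 < r) :
    ∫⁻ x in (ball (0 : V) r)ᶜ, ofReal (‖x‖ ^ (-q)) ∂μ
      = ofReal (r ^ ((finrank ℝ V : ℝ) - q)) *
          ∫⁻ x in (ball (0 : V) 1)ᶜ, ofReal (‖x‖ ^ (-q)) ∂μ := by
  rw [← setLIntegral_smul_set_norm_rpow_neg q hr measurableSet_ball.compl, compl_eq_univ_sdiff,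
    compl_eq_univ_sdiff, smul_set_sdiff₀ hr.ne', smul_set_univ₀ hr.ne', smul_unitBall_of_pos hr]

theorem integrableOn_ball_norm_rpow_neg [Nontrivial V] {q : ℝ} (hq : q < finrank ℝ V) :
    IntegrableOn (fun x : V ↦ ‖x‖ ^ (-q)) (ball 0 1) μ :=
  integrableOn_ball_of_norm_le_rpow (C := 1) finrank_pos hq
    (ae_of_all _ fun x ↦ by rw [one_mul, norm_of_nonneg (by positivity)])
    (measurable_norm.pow_const _).aestronglyMeasurable

theorem integrableOn_compl_ball_norm_rpow_neg {q : ℝ} (hq : finrank ℝ V < q) :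
    IntegrableOn (fun x : V ↦ ‖x‖ ^ (-q)) (ball 0 1)ᶜ μ := by
  have hq0 : 0 ≤ q := (Nat.cast_nonneg _).trans hq.le
  refine (((integrable_one_add_norm hq).const_mul (2 ^ q)).integrableOn).mono'
    (measurable_norm.pow_const _).aestronglyMeasurable ?_
  refine ae_restrict_of_forall_mem measurableSet_ball.compl fun x hx ↦ ?_
  have hx1 : 1 ≤ ‖x‖ := by simpa using hx
  have h : (2 * ‖x‖) ^ (-q) ≤ (1 + ‖x‖) ^ (-q) :=
    rpow_le_rpow_of_nonpos (by positivity) (by linarith) (by linarith)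
  rw [mul_rpow zero_le_two (norm_nonneg x), rpow_neg zero_le_two,
    inv_mul_le_iff₀ (by positivity)] at h
  rwa [norm_of_nonneg (by positivity)]

variable {p s R : ℝ}

theorem setLIntegral_ball_half_le (hs : 0 ≤ s) (y : V) (hR0 : 0 < R) (hR : R ≤ 1 + ‖y‖) :
    ∫⁻ z in ball y (R / 2), ofReal (‖y - z‖ ^ (-p) * (1 + ‖z‖) ^ (-s)) ∂μ
      ≤ ofReal (R ^ ((finrank ℝ V : ℝ) - p - s)) * (ofReal (2 ^ (p + s - finrank ℝ V)) *
          ∫⁻ x in ball (0 : V) 1, ofReal (‖x‖ ^ (-p)) ∂μ) := by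
  have hpt : ∀ z ∈ ball y (R / 2), ofReal (‖y - z‖ ^ (-p) * (1 + ‖z‖) ^ (-s))
      ≤ ofReal ((R / 2) ^ (-s)) * ofReal (‖y - z‖ ^ (-p)) := by
    intro z hz
    have hyz : ‖y - z‖ < R / 2 := by rwa [mem_ball, dist_eq_norm'] at hz
    have hz : R / 2 ≤ 1 + ‖z‖ := by linarith [norm_le_norm_sub_add y z]
    rw [← ENNReal.ofReal_mul (by positivity), mul_comm]
    exact ENNReal.ofReal_le_ofReal <| mul_le_mul_of_nonneg_right
      (rpow_le_rpow_of_nonpos (half_pos hR0) hz (neg_nonpos.2 hs)) (by positivity)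
  calc _ ≤ ∫⁻ z in ball y (R / 2),
          ofReal ((R / 2) ^ (-s)) * ofReal (‖y - z‖ ^ (-p)) ∂μ :=
        setLIntegral_mono' measurableSet_ball hpt
    _ = ofReal ((R / 2) ^ (-s)) * (ofReal ((R / 2) ^ ((finrank ℝ V : ℝ) - p)) *
          ∫⁻ x in ball (0 : V) 1, ofReal (‖x‖ ^ (-p)) ∂μ) := by
        rw [lintegral_const_mul' _ _ ENNReal.ofReal_ne_top,
          setLIntegral_ball_comp_norm_sub (fun t ↦ ofReal (t ^ (-p))),
          setLIntegral_ball_norm_rpow_neg p (by positivity)]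
    _ = _ := by
        rw [← mul_assoc, ← mul_assoc, ← ENNReal.ofReal_mul (by positivity),
          ← ENNReal.ofReal_mul (by positivity), ← rpow_add (by positivity),
          div_rpow hR0.le zero_le_two, div_eq_mul_inv, ← rpow_neg zero_le_two]
        ring_nf

theorem setLIntegral_ball_sdiff_ball_half_le [NullSingletonClass μ] (hp : 0 ≤ p) (hs : 0 ≤ s)
    (y : V) (hR0 : 0 < R) :
    ∫⁻ z in ball 0 R \ ball y (R / 2), ofReal (‖y - z‖ ^ (-p) * (1 + ‖z‖) ^ (-s)) ∂μ
      ≤ ofReal (R ^ ((finrank ℝ V : ℝ) - p - s)) * (ofReal (2 ^ p) *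
          ∫⁻ x in ball (0 : V) 1, ofReal (‖x‖ ^ (-s)) ∂μ) := by
  have hpt : ∀ᵐ z ∂μ, z ∈ ball 0 R \ ball y (R / 2) →
      ofReal (‖y - z‖ ^ (-p) * (1 + ‖z‖) ^ (-s))
        ≤ ofReal ((R / 2) ^ (-p)) * ofReal (‖z‖ ^ (-s)) := by
    filter_upwards [μ.ae_ne 0] with z hz0 hz
    have hyz : R / 2 ≤ ‖y - z‖ := by
      simpa [dist_eq_norm'] using hz.2
    rw [← ENNReal.ofReal_mul (by positivity)]
    exact ENNReal.ofReal_le_ofReal <| mul_le_mul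
      (rpow_le_rpow_of_nonpos (half_pos hR0) hyz (neg_nonpos.2 hp))
      (rpow_le_rpow_of_nonpos (norm_pos_iff.2 hz0) (by linarith) (neg_nonpos.2 hs))
      (by positivity) (by positivity)
  calc _ ≤ ∫⁻ z in ball 0 R \ ball y (R / 2),
          ofReal ((R / 2) ^ (-p)) * ofReal (‖z‖ ^ (-s)) ∂μ :=
        setLIntegral_mono_ae' (measurableSet_ball.diff measurableSet_ball) hpt
    _ ≤ ∫⁻ z in ball 0 R, ofReal ((R / 2) ^ (-p)) * ofReal (‖z‖ ^ (-s)) ∂μ :=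
        lintegral_mono_set sdiff_subset
    _ = ofReal ((R / 2) ^ (-p)) * (ofReal (R ^ ((finrank ℝ V : ℝ) - s)) *
          ∫⁻ x in ball (0 : V) 1, ofReal (‖x‖ ^ (-s)) ∂μ) := by
        rw [lintegral_const_mul' _ _ ENNReal.ofReal_ne_top, setLIntegral_ball_norm_rpow_neg s hR0]
    _ = _ := by
        rw [← mul_assoc, ← mul_assoc, ← ENNReal.ofReal_mul (by positivity),
          ← ENNReal.ofReal_mul (by positivity), div_rpow hR0.le zero_le_two, rpow_neg zero_le_two,
          div_eq_mul_inv, inv_inv, mul_comm (R ^ (-p)), mul_assoc, ← rpow_add hR0]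
        ring_nf

theorem setLIntegral_compl_ball_sdiff_ball_half_le (hp : 0 ≤ p) (hs : 0 ≤ s) (y : V)
    (hR0 : 0 < R) (hR : ‖y‖ ≤ R) :
    ∫⁻ z in (ball 0 R)ᶜ \ ball y (R / 2),
        ofReal (‖y - z‖ ^ (-p) * (1 + ‖z‖) ^ (-s)) ∂μ
      ≤ ofReal (R ^ ((finrank ℝ V : ℝ) - p - s)) * (ofReal (4 ^ p) *
          ∫⁻ x in (ball (0 : V) 1)ᶜ, ofReal (‖x‖ ^ (-(p + s))) ∂μ) := by
  have hpt : ∀ z ∈ (ball 0 R)ᶜ \ ball y (R / 2),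
      ofReal (‖y - z‖ ^ (-p) * (1 + ‖z‖) ^ (-s))
        ≤ ofReal (4 ^ p) * ofReal (‖z‖ ^ (-(p + s))) := by
    rintro z ⟨hzR, hyz⟩
    have hzR : R ≤ ‖z‖ := by simpa using hzR
    have hyz : R / 2 ≤ ‖y - z‖ := by simpa [dist_eq_norm'] using hyz
    have hz0 : 0 < ‖z‖ := hR0.trans_le hzR
    have hz4 : ‖z‖ / 4 ≤ ‖y - z‖ := by
      rcases le_or_gt ‖z‖ (2 * R) with h | h
      · linarith
      · linarith [norm_sub_norm_le z y, norm_sub_rev y z]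
    have hp' : ‖y - z‖ ^ (-p) ≤ (‖z‖ / 4) ^ (-p) :=
      rpow_le_rpow_of_nonpos (by positivity) hz4 (neg_nonpos.2 hp)
    have hs' : (1 + ‖z‖) ^ (-s) ≤ ‖z‖ ^ (-s) :=
      rpow_le_rpow_of_nonpos hz0 (by linarith) (neg_nonpos.2 hs)
    rw [← ENNReal.ofReal_mul (by positivity)]
    refine ENNReal.ofReal_le_ofReal
      ((mul_le_mul hp' hs' (by positivity) (by positivity)).trans_eq ?_)
    rw [div_rpow hz0.le (by norm_num), rpow_neg (by norm_num : (0 : ℝ) ≤ 4), div_eq_mul_inv,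
      inv_inv, mul_comm (‖z‖ ^ (-p)), mul_assoc, ← rpow_add hz0, neg_add]
  calc _ ≤ ∫⁻ z in (ball 0 R)ᶜ \ ball y (R / 2),
          ofReal (4 ^ p) * ofReal (‖z‖ ^ (-(p + s))) ∂μ :=
        setLIntegral_mono' (measurableSet_ball.compl.diff measurableSet_ball) hpt
    _ ≤ ∫⁻ z in (ball 0 R)ᶜ, ofReal (4 ^ p) * ofReal (‖z‖ ^ (-(p + s))) ∂μ :=
        lintegral_mono_set sdiff_subset
    _ = _ := by
        rw [lintegral_const_mul' _ _ ENNReal.ofReal_ne_top,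
          setLIntegral_compl_ball_norm_rpow_neg (p + s) hR0, sub_sub]
        ring

variable (μ p s) in
def decayConstant : ℝ≥0∞ :=
  ofReal (2 ^ (p + s - finrank ℝ V)) * ∫⁻ x in ball (0 : V) 1, ofReal (‖x‖ ^ (-p)) ∂μ
    + ofReal (2 ^ p) * ∫⁻ x in ball (0 : V) 1, ofReal (‖x‖ ^ (-s)) ∂μ
    + ofReal (4 ^ p) * ∫⁻ x in (ball (0 : V) 1)ᶜ, ofReal (‖x‖ ^ (-(p + s))) ∂μ

theorem decayConstant_lt_top [Nontrivial V] (hp : p < finrank ℝ V) (hs : s < finrank ℝ V)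
    (hps : finrank ℝ V < p + s) : decayConstant μ p s < ∞ := by
  have h₁ := (integrableOn_ball_norm_rpow_neg (μ := μ) hp).setLIntegral_lt_top
  have h₂ := (integrableOn_ball_norm_rpow_neg (μ := μ) hs).setLIntegral_lt_top
  have h₃ := (integrableOn_compl_ball_norm_rpow_neg (μ := μ) hps).setLIntegral_lt_top
  unfold decayConstant
  finiteness

theorem lintegral_norm_sub_rpow_neg_mul_le [NullSingletonClass μ] (hp : 0 ≤ p) (hs : 0 ≤ s)
    (y : V) :
    ∫⁻ z, ofReal (‖y - z‖ ^ (-p) * (1 + ‖z‖) ^ (-s)) ∂μ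
      ≤ ofReal ((1 + ‖y‖) ^ ((finrank ℝ V : ℝ) - p - s)) * decayConstant μ p s := by
  set R := 1 + ‖y‖
  have hR0 : 0 < R := by positivity
  set f := fun z ↦ ofReal (‖y - z‖ ^ (-p) * (1 + ‖z‖) ^ (-s))
  set A := ball y (R / 2)
  set B := ball (0 : V) R
  have hcover : A ∪ (B \ A) ∪ (Bᶜ \ A) = univ := by
    ext z
    simp only [mem_union, mem_sdiff, mem_compl_iff, mem_univ, iff_true]
    tauto
  calc ∫⁻ z, f z ∂μ = ∫⁻ z in A ∪ (B \ A) ∪ (Bᶜ \ A), f z ∂μ := by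
        rw [hcover, setLIntegral_univ]
    _ ≤ (∫⁻ z in A, f z ∂μ) + (∫⁻ z in B \ A, f z ∂μ) + ∫⁻ z in Bᶜ \ A, f z ∂μ :=
        (lintegral_union_le _ _ _).trans (add_le_add_left (lintegral_union_le _ _ _) _)
    _ ≤ _ := by
        refine (add_le_add (add_le_add (setLIntegral_ball_half_le hs y hR0 le_rfl)
          (setLIntegral_ball_sdiff_ball_half_le hp hs y hR0))
          (setLIntegral_compl_ball_sdiff_ball_half_le hp hs y hR0 (by linarith))).trans_eq ?_
        rw [decayConstant]
        ring

theorem exists_integral_norm_sub_rpow_neg_mul_le (hp : p < finrank ℝ V) (hs : s < finrank ℝ V)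
    (hps : finrank ℝ V < p + s) :
    ∃ C : ℝ, 0 < C ∧ ∀ y : V, ∫ z, ‖y - z‖ ^ (-p) * (1 + ‖z‖) ^ (-s) ∂μ
      ≤ C * (1 + ‖y‖) ^ ((finrank ℝ V : ℝ) - p - s) := by
  have hp0 : 0 ≤ p := by linarith
  have hs0 : 0 ≤ s := by linarith
  have : Nontrivial V :=
    Module.nontrivial_of_finrank_pos (R := ℝ) (by exact_mod_cast hp0.trans_lt hp)
  have hM := (decayConstant_lt_top (μ := μ) hp hs hps).ne
  refine ⟨(decayConstant μ p s).toReal + 1, by positivity, fun y ↦ ?_⟩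
  calc ∫ z, ‖y - z‖ ^ (-p) * (1 + ‖z‖) ^ (-s) ∂μ
      = (∫⁻ z, ofReal (‖y - z‖ ^ (-p) * (1 + ‖z‖) ^ (-s)) ∂μ).toReal :=
        integral_eq_lintegral_of_nonneg_ae (ae_of_all _ fun z ↦ by positivity) (by fun_prop)
    _ ≤ (ofReal ((1 + ‖y‖) ^ ((finrank ℝ V : ℝ) - p - s)) * decayConstant μ p s).toReal :=
        ENNReal.toReal_mono (by finiteness) (lintegral_norm_sub_rpow_neg_mul_le hp0 hs0 y)
    _ = (1 + ‖y‖) ^ ((finrank ℝ V : ℝ) - p - s) * (decayConstant μ p s).toReal := by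
        rw [ENNReal.toReal_mul, ENNReal.toReal_ofReal (by positivity)]
    _ ≤ _ := by
        rw [mul_comm]
        gcongr
        linarith

end RieszPotential

theorem riesz_potential_decay_general (N : ℕ) (δ : ℝ) (hδ : 0 < δ) (hδ' : δ < (N : ℝ) - 2) :
    ∃ C : ℝ, 0 < C ∧ ∀ y : E N,
      (∫ z : E N, ‖y - z‖ ^ (-((N : ℝ) - 2)) * (1 + ‖z‖) ^ (-(2 + δ)))
        ≤ C * (1 + ‖y‖) ^ (-δ) := by
  have hd : (finrank ℝ (E N) : ℝ) = N := by simp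
  obtain ⟨C, hC, hbound⟩ := RieszPotential.exists_integral_norm_sub_rpow_neg_mul_le
    (μ := (volume : Measure (E N))) (p := N - 2) (s := 2 + δ) (by rw [hd]; linarith)
    (by rw [hd]; linarith) (by rw [hd]; linarith)
  refine ⟨C, hC, fun y ↦ (hbound y).trans_eq ?_⟩
  rw [hd]
  ring_nf

/-- Convolution-type decay estimate: `∫ |y-z|^{-(N-2)} (1+|z|)^{-(2+δ)} dz ≤ C(1+|y|)^{-δ}`. -/
theorem riesz_potential_decay (N : ℕ) (hN : 3 ≤ N) (δ : ℝ) (hδ : 0 < δ) (hδ' : δ < (N : ℝ) - 2) :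
    ∃ C : ℝ, 0 < C ∧ ∀ y : E N,
      (∫ z : E N, ‖y - z‖ ^ (-((N : ℝ) - 2)) * (1 + ‖z‖) ^ (-(2 + δ)))
        ≤ C * (1 + ‖y‖) ^ (-δ) :=
  riesz_potential_decay_general N δ hδ hδ'
end
end
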